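/- An effective divisor D on a connected graph G has positive rank if and only if for every vertex q, the q-reduced divisor equivalent to D has at least one chip on q (i.e., D_q(q) ≥ 1). -/

import Mathlib

open Finset

namespace Gonality

variable {V : Type*}

/-- Laplacian matrix of a multigraph given by edge multiplicities `E`. -/
def lap [Fintype V] [DecidableEq V] (E : V → V → ℕ) : Matrix V V ℤ :=
  Matrix.of fun u v => if u = v then (∑ w, (E u w : ℤ)) else -(E u v : ℤ)

/-- Connectivity of the multigraph with edge multiplicities `E`. -/
def MGConnected (E : V → V → ℕ) : Prop :=
  ∀ u v : V, Relation.ReflTransGen (fun a b => 0 < E a b) u v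

/-- Indicator vector of a set of vertices. -/
def ind [DecidableEq V] (U : Finset V) : V → ℤ := fun v => if v ∈ U then 1 else 0

/-- Number of edges from `v` to the complement of `U`. -/
def outdeg [Fintype V] [DecidableEq V] (E : V → V → ℕ) (U : Finset V) (v : V) : ℤ :=
  ∑ u ∈ Uᶜ, (E v u : ℤ)

/-- `U` can be fired from the divisor `D`. -/
def Fireable [Fintype V] [DecidableEq V] (E : V → V → ℕ) (D : V → ℤ) (U : Finset V) : Prop :=
  ∀ v ∈ U, outdeg E U v ≤ D v

/-- Maximum entry of an integer vector. -/
def vmax [Fintype V] [Nonempty V] (x : V → ℤ) : ℤ :=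
  Finset.univ.sup' Finset.univ_nonempty x

lemma lap_mulVec [Fintype V] [DecidableEq V] (E : V → V → ℕ) (hloop : ∀ v, E v v = 0)
    (y : V → ℤ) (v : V) :
    (lap E).mulVec y v = ∑ u, (E v u : ℤ) * (y v - y u) := by
  have h : ∀ u : V, lap E v u * y u = (E v u : ℤ) * (y v - y u) + lap E v u * y v := by
    intro u
    by_cases huv : v = u
    · subst huv; simp [lap, hloop]
    · simp only [lap, Matrix.of_apply, if_neg huv]
      ring
  have hrow : ∑ u, lap E v u = 0 := by
    have h2 : ∀ x : V, lap E v x =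
        -(E v x : ℤ) + (if v = x then (∑ w, (E v w : ℤ)) + (E v x : ℤ) else 0) := by
      intro x
      by_cases hvx : v = x
      · subst hvx; simp [lap]
      · simp [lap, hvx]
    rw [Finset.sum_congr rfl fun x _ => h2 x, Finset.sum_add_distrib,
      Finset.sum_ite_eq univ v]
    simp [hloop]
  calc (lap E).mulVec y v = ∑ u, lap E v u * y u := rfl
    _ = ∑ u, ((E v u : ℤ) * (y v - y u) + lap E v u * y v) :=
        Finset.sum_congr rfl fun u _ => h u
    _ = ∑ u, (E v u : ℤ) * (y v - y u) + (∑ u, lap E v u) * y v := by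
        rw [Finset.sum_add_distrib, Finset.sum_mul]
    _ = ∑ u, (E v u : ℤ) * (y v - y u) := by rw [hrow]; ring

lemma sum_lap_mulVec [Fintype V] [DecidableEq V] (E : V → V → ℕ)
    (hsym : ∀ u v, E u v = E v u) (hloop : ∀ v, E v v = 0)
    (y : V → ℤ) (S : Finset V) :
    ∑ v ∈ S, (lap E).mulVec y v = ∑ v ∈ S, ∑ u ∈ Sᶜ, (E v u : ℤ) * (y v - y u) := by
  have hz : ∑ v ∈ S, ∑ u ∈ S, (E v u : ℤ) * (y v - y u) = 0 := by
    have h1 : ∑ v ∈ S, ∑ u ∈ S, (E v u : ℤ) * y u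
        = ∑ v ∈ S, ∑ u ∈ S, (E v u : ℤ) * y v := by
      rw [Finset.sum_comm]
      exact Finset.sum_congr rfl fun v _ => Finset.sum_congr rfl fun u _ => by
        rw [hsym]
    simp only [mul_sub, Finset.sum_sub_distrib]
    rw [h1, sub_self]
  calc ∑ v ∈ S, (lap E).mulVec y v
      = ∑ v ∈ S, ∑ u, (E v u : ℤ) * (y v - y u) :=
        Finset.sum_congr rfl fun v _ => lap_mulVec E hloop y v
    _ = ∑ v ∈ S, (∑ u ∈ S, (E v u : ℤ) * (y v - y u)
          + ∑ u ∈ Sᶜ, (E v u : ℤ) * (y v - y u)) :=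
        Finset.sum_congr rfl fun v _ => (Finset.sum_add_sum_compl S _).symm
    _ = ∑ v ∈ S, ∑ u ∈ Sᶜ, (E v u : ℤ) * (y v - y u) := by
        rw [Finset.sum_add_distrib, hz, zero_add]

lemma edge_bound [Fintype V] [DecidableEq V] (E : V → V → ℕ)
    (hsym : ∀ u v, E u v = E v u) (hloop : ∀ v, E v v = 0)
    (D y : V → ℤ) (hD : 0 ≤ D) (q : V) (hyq : y q = 0) (hy0 : 0 ≤ y)
    (hDy : 0 ≤ D - (lap E).mulVec y) {a b : V} (hab : 0 < E a b) :
    y b ≤ y a + ∑ w, D w := by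
  have hDnn : (0:ℤ) ≤ ∑ w, D w := Finset.sum_nonneg fun w _ => hD w
  by_cases hba : y b ≤ y a
  · linarith
  push_neg at hba
  set A : Finset V := univ.filter (fun w => y a + 1 ≤ y w) with hA
  have hbA : b ∈ A := by simp [hA]; omega
  have haA : a ∉ A := by simp [hA]
  have key : ∀ v ∈ A, ∀ u ∈ Aᶜ, (0:ℤ) ≤ (E v u : ℤ) * (y v - y u) := by
    intro v hv u hu
    simp only [hA, Finset.mem_filter, Finset.mem_compl, Finset.mem_univ, true_and] at hv hu
    have : y u ≤ y a := by omega
    have : (0:ℤ) ≤ y v - y u := by omega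
    positivity
  have h1 : ∑ v ∈ A, (lap E).mulVec y v ≤ ∑ w, D w := by
    calc ∑ v ∈ A, (lap E).mulVec y v ≤ ∑ v ∈ A, D v :=
          Finset.sum_le_sum fun v _ => by
            have := hDy v; simp only [Pi.sub_apply, Pi.zero_apply] at this; linarith
      _ ≤ ∑ w, D w :=
          Finset.sum_le_sum_of_subset_of_nonneg (Finset.subset_univ A)
            fun w _ _ => hD w
  have h2 : (E b a : ℤ) * (y b - y a) ≤ ∑ v ∈ A, (lap E).mulVec y v := by
    rw [sum_lap_mulVec E hsym hloop y A]
    have haAc : a ∈ Aᶜ := Finset.mem_compl.mpr haA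
    calc (E b a : ℤ) * (y b - y a)
        ≤ ∑ u ∈ Aᶜ, (E b u : ℤ) * (y b - y u) :=
          Finset.single_le_sum (fun u hu => key b hbA u hu) haAc
      _ ≤ ∑ v ∈ A, ∑ u ∈ Aᶜ, (E v u : ℤ) * (y v - y u) :=
          Finset.single_le_sum
            (fun v hv => Finset.sum_nonneg fun u hu => key v hv u hu) hbA
  have hEba : (1:ℤ) ≤ (E b a : ℤ) := by
    have : 0 < E b a := by rw [hsym]; exact hab
    exact_mod_cast this
  nlinarith [h1, h2]

lemma exists_crossing (E : V → V → ℕ) [DecidableEq V] (hconn : MGConnected E)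
    (q : V) (A : Finset V) (hq : q ∉ A) {b : V} (hb : b ∈ A) :
    ∃ u v, u ∉ A ∧ v ∈ A ∧ 0 < E u v := by
  have h := hconn q b
  induction h with
  | refl => exact absurd hb hq
  | @tail c d hqc hcd ih =>
    by_cases hc : c ∈ A
    · exact ih hc
    · exact ⟨c, d, hc, hb, hcd⟩

lemma y_bound [Fintype V] [DecidableEq V] (E : V → V → ℕ)
    (hsym : ∀ u v, E u v = E v u) (hloop : ∀ v, E v v = 0) (hconn : MGConnected E)
    (D y : V → ℤ) (hD : 0 ≤ D) (q : V) (hyq : y q = 0) (hy0 : 0 ≤ y)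
    (hDy : 0 ≤ D - (lap E).mulVec y) (v : V) :
    y v ≤ (Fintype.card V : ℤ) * ∑ w, D w := by
  have hDnn : (0:ℤ) ≤ ∑ w, D w := Finset.sum_nonneg fun w _ => hD w
  suffices h : ∀ n : ℕ, ∀ v : V, y v ≤ (n : ℤ) →
      y v ≤ ((univ.filter (fun w => y w < y v)).card : ℤ) * ∑ w, D w by
    have h1 := h (y v).toNat v (by exact_mod_cast (Int.self_le_toNat _))
    have h2 : ((univ.filter (fun w => y w < y v)).card : ℤ) ≤ (Fintype.card V : ℤ) := by
      exact_mod_cast Finset.card_le_card (Finset.subset_univ _)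
    calc y v ≤ _ := h1
      _ ≤ (Fintype.card V : ℤ) * ∑ w, D w := mul_le_mul_of_nonneg_right h2 hDnn
  intro n
  induction n with
  | zero =>
    intro v hv0
    have : y v = 0 := le_antisymm (by exact_mod_cast hv0) (hy0 v)
    rw [this]
    positivity
  | succ n ih =>
    intro v hv
    by_cases hvn : y v ≤ (n : ℤ)
    · exact ih v hvn
    push_neg at hvn
    have hv1 : 1 ≤ y v := by omega
    set A : Finset V := univ.filter (fun w => y v ≤ y w) with hA
    have hqA : q ∉ A := by simp [hA, hyq]; omega
    have hvA : v ∈ A := by simp [hA]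
    obtain ⟨s, t, hsA, htA, hst⟩ := exists_crossing E hconn q A hqA hvA
    simp only [hA, Finset.mem_filter, Finset.mem_univ, true_and] at hsA htA
    push_neg at hsA
    have h1 : y t ≤ y s + ∑ w, D w := edge_bound E hsym hloop D y hD q hyq hy0 hDy hst
    have ihs : y s ≤ ((univ.filter (fun w => y w < y s)).card : ℤ) * ∑ w, D w :=
      ih s (by omega)
    have hcard : ((univ.filter (fun w => y w < y s)).card : ℤ) + 1
        ≤ ((univ.filter (fun w => y w < y v)).card : ℤ) := by
      have hsub : insert s (univ.filter (fun w => y w < y s))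
          ⊆ univ.filter (fun w => y w < y v) := by
        intro w hw
        rcases Finset.mem_insert.mp hw with h | h
        · subst h; simp [hsA]
        · simp only [Finset.mem_filter, Finset.mem_univ, true_and] at h ⊢; omega
      have hns : s ∉ univ.filter (fun w => y w < y s) := by simp
      have := Finset.card_le_card hsub
      rw [Finset.card_insert_of_notMem hns] at this
      exact_mod_cast this
    calc y v ≤ y t := htA
      _ ≤ y s + ∑ w, D w := h1
      _ ≤ ((univ.filter (fun w => y w < y s)).card : ℤ) * ∑ w, D w + ∑ w, D w := by
          linarith
      _ = (((univ.filter (fun w => y w < y s)).card : ℤ) + 1) * ∑ w, D w := by ring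
      _ ≤ ((univ.filter (fun w => y w < y v)).card : ℤ) * ∑ w, D w :=
          mul_le_mul_of_nonneg_right hcard hDnn

/-- an effective divisor `D` has positive rank iff for every
vertex `q` the `q`-reduced divisor equivalent to `D` has a chip on `q`. -/
theorem positive_rank_iff_reduced_has_chip [Fintype V] [DecidableEq V]
    (E : V → V → ℕ) (hsym : ∀ u v, E u v = E v u) (hloop : ∀ v, E v v = 0)
    (hconn : MGConnected E)
    (D : V → ℤ) (hD : 0 ≤ D) :
    (∀ q : V, ∃ y : V → ℤ,
        0 ≤ (D - ind {q}) - (lap E).mulVec y) ↔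
      (∀ (q : V) (Dq : V → ℤ), 0 ≤ Dq → (∃ y : V → ℤ, Dq = D - (lap E).mulVec y) →
        (∀ U : Finset V, U.Nonempty → q ∉ U → ¬ 0 ≤ Dq - (lap E).mulVec (ind U)) →
        1 ≤ Dq q) := by
  constructor
  · -- forward
    rintro hL q Dq hDq ⟨z, hz⟩ hred
    by_contra hlt
    push_neg at hlt
    obtain ⟨y, hy⟩ := hL q
    set x : V → ℤ := y - z with hxdef
    have hF : ∀ v, (lap E).mulVec x v ≤ Dq v - ind {q} v := by
      intro v
      have h1 := hy v
      simp only [Pi.sub_apply, Pi.zero_apply] at h1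
      have h2 : Dq v = D v - (lap E).mulVec z v := by rw [hz]; simp
      have h3 : (lap E).mulVec x v = (lap E).mulVec y v - (lap E).mulVec z v := by
        rw [hxdef, Matrix.mulVec_sub]; simp
      linarith
    have hindq : ind ({q} : Finset V) q = 1 := by simp [ind]
    have hxq : (lap E).mulVec x q < 0 := by
      have := hF q
      rw [hindq] at this
      omega
    have hex : ∃ u, x q < x u := by
      by_contra h
      push_neg at h
      have : 0 ≤ (lap E).mulVec x q := by
        rw [lap_mulVec E hloop]
        exact Finset.sum_nonneg fun u _ => by
          have := h u
          exact mul_nonneg (by positivity) (by linarith)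
      omega
    obtain ⟨v0, _, hmax⟩ := Finset.exists_max_image univ x ⟨q, Finset.mem_univ q⟩
    set A : Finset V := univ.filter (fun w => x v0 ≤ x w) with hA
    have hv0A : v0 ∈ A := by simp [hA]
    have hqA : q ∉ A := by
      obtain ⟨u, hu⟩ := hex
      have := hmax u (Finset.mem_univ u)
      simp [hA]; omega
    refine hred A ⟨v0, hv0A⟩ hqA ?_
    rw [Pi.le_def]
    intro v
    simp only [Pi.sub_apply, Pi.zero_apply, sub_nonneg]
    by_cases hvA : v ∈ A
    · have hvq : v ≠ q := fun h => hqA (h ▸ hvA)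
      have h1 : (lap E).mulVec x v ≤ Dq v := by
        have := hF v
        have : ind ({q} : Finset V) v = 0 := by simp [ind, hvq]
        have := hF v
        simp only [ind, Finset.mem_singleton, hvq, if_false] at this
        linarith [hF v, this]
      refine le_trans ?_ h1
      rw [lap_mulVec E hloop, lap_mulVec E hloop]
      apply Finset.sum_le_sum
      intro u _
      apply mul_le_mul_of_nonneg_left _ (by positivity)
      simp only [hA, Finset.mem_filter, Finset.mem_univ, true_and] at hvA
      have hxv : x v = x v0 := le_antisymm (hmax v (Finset.mem_univ v)) hvA
      by_cases huA : u ∈ A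
      · simp only [ind, huA, hvA, if_true]
        simp only [hA, Finset.mem_filter, Finset.mem_univ, true_and] at huA
        have hxu : x u = x v0 := le_antisymm (hmax u (Finset.mem_univ u)) huA
        have hvA' : v ∈ A := by simp [hA, hvA]
        simp [ind, hvA', huA]
        omega
      · have hvA' : v ∈ A := by simp [hA, hvA]
        simp only [ind, hvA', huA, if_true, if_false]
        simp only [hA, Finset.mem_filter, Finset.mem_univ, true_and, not_le] at huA
        omega
    · refine le_trans ?_ (hDq v)
      rw [lap_mulVec E hloop]
      apply Finset.sum_nonpos
      intro u _
      apply mul_nonpos_of_nonneg_of_nonpos (by positivity)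
      simp only [ind, hvA, if_false]
      split <;> omega
  · -- backward
    intro hR q
    classical
    set B : ℤ := (Fintype.card V : ℤ) * ∑ w, D w with hB
    have hDnn : (0:ℤ) ≤ ∑ w, D w := Finset.sum_nonneg fun w _ => hD w
    have hBnn : 0 ≤ B := by exact mul_nonneg (by positivity) hDnn
    set S : Finset (V → ℤ) :=
      (Finset.Icc (0 : V → ℤ) (fun _ => B)).filter
        (fun y => y q = 0 ∧ 0 ≤ D - (lap E).mulVec y) with hS
    have h0S : (0 : V → ℤ) ∈ S := by
      simp only [hS, Finset.mem_filter, Finset.mem_Icc]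
      refine ⟨⟨le_refl _, fun v => hBnn⟩, rfl, ?_⟩
      simp [Matrix.mulVec_zero, hD]
    obtain ⟨y, hyS, hymax⟩ := Finset.exists_max_image S (fun y => ∑ v, y v) ⟨0, h0S⟩
    simp only [hS, Finset.mem_filter, Finset.mem_Icc] at hyS
    obtain ⟨⟨hy0, hyB⟩, hyq, hDy⟩ := hyS
    set Dq : V → ℤ := D - (lap E).mulVec y with hDqdef
    have hred : ∀ U : Finset V, U.Nonempty → q ∉ U →
        ¬ 0 ≤ Dq - (lap E).mulVec (ind U) := by
      rintro U hUne hqU hfire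
      set y' : V → ℤ := y + ind U with hy'
      have hy'q : y' q = 0 := by simp [hy', ind, hqU, hyq]
      have hy'0 : 0 ≤ y' := by
        intro v
        have h3 := hy0 v
        simp only [Pi.zero_apply] at h3 ⊢
        simp only [hy', Pi.add_apply, ind]
        split <;> omega
      have hDy' : 0 ≤ D - (lap E).mulVec y' := by
        have : (lap E).mulVec y' = (lap E).mulVec y + (lap E).mulVec (ind U) := by
          rw [hy', Matrix.mulVec_add]
        rw [this]
        intro v
        have := hfire v
        simp only [hDqdef, Pi.sub_apply, Pi.add_apply, Pi.zero_apply] at this ⊢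
        linarith
      have hy'B : ∀ v, y' v ≤ B :=
        fun v => y_bound E hsym hloop hconn D y' hD q hy'q hy'0 hDy' v
      have hy'S : y' ∈ S := by
        simp only [hS, Finset.mem_filter, Finset.mem_Icc]
        exact ⟨⟨hy'0, fun v => hy'B v⟩, hy'q, hDy'⟩
      have hsum : ∑ v, y' v = ∑ v, y v + U.card := by
        simp only [hy', Pi.add_apply, Finset.sum_add_distrib]
        congr 1
        simp only [ind]
        rw [Finset.sum_ite_mem, Finset.univ_inter, Finset.sum_const]
        simp
      have := hymax y' hy'S
      have hUc : 0 < U.card := Finset.card_pos.mpr hUne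
      omega
    have h1 : 1 ≤ Dq q := by
      refine hR q Dq ?_ ⟨y, rfl⟩ hred
      exact hDy
    refine ⟨y, ?_⟩
    rw [Pi.le_def]
    intro v
    simp only [Pi.sub_apply, Pi.zero_apply]
    by_cases hvq : v = q
    · subst hvq
      have hi : ind ({v} : Finset V) v = 1 := by simp [ind]
      have h2 := h1
      simp only [hDqdef, Pi.sub_apply] at h2
      rw [hi]
      linarith
    · have hi : ind ({q} : Finset V) v = 0 := by simp [ind, hvq]
      have h2 := hDy v
      simp only [hDqdef, Pi.sub_apply, Pi.zero_apply] at h2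
      rw [hi]
      linarith
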